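/- Let n ∈ ℕ, m > 0, λ ∈ [1/3,1], K > 0 with K ≥ √(b_λ Rⁿ), δ ∈ (0,1), and let B₀ ∈ (0,1) satisfy K√B₀ < Rⁿ, B₀ ≤ K²/(4(a_λ + b_λ)²), and (μ/(n A_T))·max{B₀/λ, 2K√B₀} ≤ δ, where μ := mn/(ω_n Rⁿ). Suppose T > 0 and B ∈ C¹([0,T)) is positive with B(t) ≤ B₀ for all t ∈ (0,T). Then for all t ∈ (0,T) and all s ∈ (B(t), K√(B(t))), writing ξ := s/B(t), one has A(t)φ(ξ) − (μ/n)B(t)ξ ≥ (1−δ)A(t)φ(ξ). -/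

import Mathlib

open Real Set

/-- `a_λ := (1-λ)²/(2λ)`. -/
noncomputable def aL (l : ℝ) : ℝ := (1 - l) ^ 2 / (2 * l)

/-- `b_λ := (3λ-1)/(2λ)`. -/
noncomputable def bL (l : ℝ) : ℝ := (3 * l - 1) / (2 * l)

/-- `ω_n`, the `(n-1)`-dimensional measure of the unit sphere in `ℝⁿ`,
equals `n` times the volume of the unit ball. -/
noncomputable def omegaN (n : ℕ) : ℝ :=
  (n : ℝ) * (MeasureTheory.volume (Metric.ball (0 : EuclideanSpace ℝ (Fin n)) 1)).toReal

/-- The comparison profile `φ`. -/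
noncomputable def phi (l d ξ : ℝ) : ℝ :=
  if ξ < 1 then (2 * l / (d * Real.exp d)) * (Real.exp (d * ξ) - 1)
  else 1 - aL l / (ξ - bL l)

/-- The derivative `φ'`. -/
noncomputable def phiD (l d ξ : ℝ) : ℝ :=
  if ξ < 1 then 2 * l * Real.exp (d * (ξ - 1)) else aL l / (ξ - bL l) ^ 2

/-- The second derivative `φ''`. -/
noncomputable def phiDD (l d ξ : ℝ) : ℝ :=
  if ξ < 1 then 2 * d * l * Real.exp (d * (ξ - 1)) else -2 * aL l / (ξ - bL l) ^ 3

/-- `N(t)`. -/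
noncomputable def Nf (l R K : ℝ) (n : ℕ) (B : ℝ → ℝ) (t : ℝ) : ℝ :=
  K ^ 2 + aL l * R ^ n - (aL l + bL l) * (2 * K * Real.sqrt (B t) - bL l * B t)

/-- `A(t)`. -/
noncomputable def Af (m ωn l R K : ℝ) (n : ℕ) (B : ℝ → ℝ) (t : ℝ) : ℝ :=
  (m / ωn) * (K ^ 2 - 2 * bL l * K * Real.sqrt (B t) + (bL l) ^ 2 * B t) / Nf l R K n B t

/-- `D(t)`. -/
noncomputable def Df (m ωn l R K : ℝ) (n : ℕ) (B : ℝ → ℝ) (t : ℝ) : ℝ :=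
  (m / ωn) * aL l / Nf l R K n B t

/-- `E(t) := m/ω_n - Rⁿ D(t)`. -/
noncomputable def Ef (m ωn l R K : ℝ) (n : ℕ) (B : ℝ → ℝ) (t : ℝ) : ℝ :=
  m / ωn - R ^ n * Df m ωn l R K n B t

/-- `A_T := (m/ω_n)·1/(1 + a_λ Rⁿ/K²)`. -/
noncomputable def AT (m ωn l R K : ℝ) (n : ℕ) : ℝ :=
  (m / ωn) * (1 / (1 + aL l * R ^ n / K ^ 2))

/-- The parabolic operator `𝒫`. -/
noncomputable def Pop (n : ℕ) (χ p q μ : ℝ) (w : ℝ → ℝ → ℝ) (s t : ℝ) : ℝ :=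
  deriv (fun τ => w s τ) t
    - (n : ℝ) ^ (p + 1) * (s ^ (2 - 2 / (n : ℝ)) * (deriv (fun σ => w σ t) s) ^ p
        * deriv (deriv (fun σ => w σ t)) s)
      / Real.sqrt ((deriv (fun σ => w σ t) s) ^ 2
        + (n : ℝ) ^ 2 * s ^ (2 - 2 / (n : ℝ)) * (deriv (deriv (fun σ => w σ t)) s) ^ 2)
    - (n : ℝ) ^ q * χ * ((w s t - (μ / (n : ℝ)) * s) * (deriv (fun σ => w σ t) s) ^ q)
      / Real.sqrt (1 + s ^ (2 / (n : ℝ) - 2) * (w s t - (μ / (n : ℝ)) * s) ^ 2)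

/-- `J₁(s,t)`. -/
noncomputable def J1 (n : ℕ) (p m ωn l R K d : ℝ) (B : ℝ → ℝ) (s t : ℝ) : ℝ :=
  -(n : ℝ) ^ (p + 1) * ((s / B t) ^ (2 - 2 / (n : ℝ)) * phiDD l d (s / B t))
    / Real.sqrt ((B t) ^ (4 / (n : ℝ) - 2) * (phiD l d (s / B t)) ^ 2
        + (n : ℝ) ^ 2 * (B t) ^ (2 / (n : ℝ) - 2) * (s / B t) ^ (2 - 2 / (n : ℝ))
          * (phiDD l d (s / B t)) ^ 2)
    * (Af m ωn l R K n B t * phiD l d (s / B t) / B t) ^ (p - 1)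

/-- `J₂(s,t)`. -/
noncomputable def J2 (n : ℕ) (q χ m ωn l R K d μ : ℝ) (B : ℝ → ℝ) (s t : ℝ) : ℝ :=
  -(n : ℝ) ^ q * χ
      * (Af m ωn l R K n B t * phi l d (s / B t) - (μ / (n : ℝ)) * B t * (s / B t))
    / Real.sqrt (1 + (B t) ^ (2 / (n : ℝ) - 2) * (s / B t) ^ (2 / (n : ℝ) - 2)
        * (Af m ωn l R K n B t * phi l d (s / B t) - (μ / (n : ℝ)) * B t * (s / B t)) ^ 2)
    * (Af m ωn l R K n B t * phiD l d (s / B t) / B t) ^ (q - 1)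

/-!
Since `ξ = s/B > 1`, only the branch `φ(ξ) = 1 - a_λ/(ξ - b_λ)` is involved, and on it
`φ(ξ) ≥ min(λξ, 1/2)`. The bounds `B ≤ K²/(4(a_λ + b_λ)²)` and `b_λ Rⁿ ≤ K²` give `A(t) ≥ A_T > 0`.
It therefore suffices that `(μ/n) s ≤ δ A_T min(λξ, 1/2)`: when the minimum is `λξ` this follows
from `s = Bξ ≤ B₀ξ`, when it is `1/2` from `s ≤ K√B ≤ K√B₀`, in both cases by the choice of `B₀`.
-/

lemma aL_nonneg {l : ℝ} (hl : 0 ≤ l) : 0 ≤ aL l := by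
  unfold aL; positivity

lemma bL_nonneg {l : ℝ} (hl : 1 / 3 ≤ l) : 0 ≤ bL l := by
  unfold bL; apply div_nonneg <;> linarith

lemma bL_le_one {l : ℝ} (hl₀ : 0 < l) (hl₁ : l ≤ 1) : bL l ≤ 1 := by
  unfold bL; rw [div_le_one (by linarith)]; linarith

lemma aL_add_bL {l : ℝ} (hl : l ≠ 0) : aL l + bL l = (1 + l) / 2 := by
  unfold aL bL; field_simp; ring

lemma phi_of_one_le {l d ξ : ℝ} (hξ : 1 ≤ ξ) : phi l d ξ = 1 - aL l / (ξ - bL l) := by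
  rw [phi, if_neg hξ.not_gt]

section Profile

variable {l d ξ : ℝ}

lemma mul_le_phi (hl : l ∈ Icc (1 / 3 : ℝ) 1) (hξ : 1 < ξ) (h : l * ξ ≤ (1 + l) / 2) :
    l * ξ ≤ phi l d ξ := by
  have hl₀ : 0 < l := by linarith [hl.1]
  have hξb : 0 < ξ - bL l := by linarith [bL_le_one hl₀ hl.2]
  have hid : (1 - l * ξ) * (ξ - bL l) - aL l = (ξ - 1) * ((1 + l) / 2 - l * ξ) := by
    unfold aL bL; field_simp; ring
  have : aL l / (ξ - bL l) ≤ 1 - l * ξ := by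
    rw [div_le_iff₀ hξb]
    nlinarith [mul_nonneg (sub_nonneg.2 hξ.le) (sub_nonneg.2 h)]
  rw [phi_of_one_le hξ.le]; linarith

lemma half_le_phi (hl : l ∈ Icc (1 / 3 : ℝ) 1) (hξ : 1 < ξ) (h : (1 + l) / 2 ≤ l * ξ) :
    1 / 2 ≤ phi l d ξ := by
  have hl₀ : 0 < l := by linarith [hl.1]
  have hξb : 0 < ξ - bL l := by linarith [bL_le_one hl₀ hl.2]
  have ha : aL l * (2 * l) = (1 - l) ^ 2 := by unfold aL; field_simp
  have hb : bL l * (2 * l) = 3 * l - 1 := by unfold bL; field_simp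
  have h2ab : 2 * aL l + bL l ≤ ξ := by
    refine le_of_mul_le_mul_right ?_ (by positivity : 0 < 2 * l)
    nlinarith [mul_nonneg hl₀.le (sub_nonneg.2 hl.2)]
  have : aL l / (ξ - bL l) ≤ 1 / 2 := by
    rw [div_le_iff₀ hξb]; linarith
  rw [phi_of_one_le hξ.le]; linarith

lemma min_mul_half_le_phi (hl : l ∈ Icc (1 / 3 : ℝ) 1) (hξ : 1 < ξ) :
    min (l * ξ) (1 / 2) ≤ phi l d ξ := by
  rcases le_total (l * ξ) ((1 + l) / 2) with h | h
  · exact (min_le_left _ _).trans (mul_le_phi hl hξ h)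
  · exact (min_le_right _ _).trans (half_le_phi hl hξ h)

end Profile

lemma omegaN_pos {n : ℕ} (hn : 0 < n) : 0 < omegaN n :=
  mul_pos (Nat.cast_pos.2 hn) <| ENNReal.toReal_pos
    (Metric.measure_ball_pos MeasureTheory.volume _ one_pos).ne' MeasureTheory.measure_ball_lt_top.ne

section Amplitude

variable {m ωn l R K : ℝ} {n : ℕ} {B : ℝ → ℝ} {t : ℝ}

lemma AT_pos (hw : 0 < m / ωn) (hl : 0 ≤ l) (hR : 0 ≤ R) : 0 < AT m ωn l R K n := by
  have := aL_nonneg hl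
  unfold AT; positivity

lemma Nf_pos (hl : 1 / 3 ≤ l) (hR : 0 < R) (hBt : 0 < B t)
    (hK : 2 * (aL l + bL l) * √(B t) ≤ K) : 0 < Nf l R K n B t := by
  have hl₀ : 0 < l := by linarith
  have hab : 0 < aL l + bL l := by rw [aL_add_bL hl₀.ne']; linarith
  have hb := bL_nonneg hl
  have hK₀ : 0 ≤ K := le_trans (by positivity) hK
  -- `2(a_λ + b_λ)√B ≤ K` absorbs the cross term; `a_λ` and `b_λ` never vanish together
  have hN : aL l * R ^ n + (aL l + bL l) * bL l * B t ≤ Nf l R K n B t := by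
    unfold Nf; nlinarith [mul_le_mul_of_nonneg_left hK hK₀]
  refine lt_of_lt_of_le ?_ hN
  rcases (aL_nonneg hl₀.le).eq_or_lt with ha | ha
  · have : 0 < bL l := by linarith
    rw [← ha]; positivity
  · positivity

lemma AT_le_Af (hw : 0 ≤ m / ωn) (hl : l ∈ Icc (1 / 3 : ℝ) 1) (hR : 0 < R) (hK : 0 < K)
    (hKb : bL l * R ^ n ≤ K ^ 2) (hBt : 0 < B t)
    (hBab : 2 * (aL l + bL l) * √(B t) ≤ K) : AT m ωn l R K n ≤ Af m ωn l R K n B t := by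
  have hl₀ : 0 < l := by linarith [hl.1]
  have ha := aL_nonneg hl₀.le
  have hb₁ := bL_le_one hl₀ hl.2
  have hN := Nf_pos (n := n) hl.1 hR hBt hBab
  have hAT : AT m ωn l R K n = m / ωn * K ^ 2 / (K ^ 2 + aL l * R ^ n) := by
    unfold AT; field_simp
  have hBK : √(B t) ≤ K := by nlinarith [aL_add_bL hl₀.ne', sqrt_nonneg (B t)]
  have hlin : 0 ≤ 2 * K * √(B t) - bL l * B t := by
    nlinarith [mul_le_mul_of_nonneg_right hb₁ hBt.le, mul_self_sqrt hBt.le, sqrt_pos.2 hBt]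
  have key := mul_nonneg hw (mul_nonneg (mul_nonneg hlin ha) (sub_nonneg.2 hKb))
  rw [hAT, Af, div_le_div_iff₀ (by positivity) hN]
  unfold Nf
  linear_combination key

end Amplitude

lemma two_mul_mul_sqrt_le {c x K : ℝ} (hc : 0 < c) (hx : 0 ≤ x) (hK : 0 ≤ K)
    (h : x ≤ K ^ 2 / (4 * c ^ 2)) : 2 * c * √x ≤ K := by
  rw [le_div_iff₀ (by positivity)] at h
  refine le_of_pow_le_pow_left₀ two_ne_zero hK ?_
  rw [mul_pow, sq_sqrt hx]; linarith

lemma le_max_mul_min {s β β₀ k l : ℝ} (hl : 0 < l) (hβ : 0 < β) (hs : 0 ≤ s) (hββ₀ : β ≤ β₀)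
    (hsk : s ≤ k) : s ≤ max (β₀ / l) (2 * k) * min (l * (s / β)) (1 / 2) := by
  rcases min_cases (l * (s / β)) (1 / 2) with ⟨h, -⟩ | ⟨h, -⟩ <;> rw [h]
  · have hξ : 0 ≤ s / β := by positivity
    calc s = β * (s / β) := (mul_div_cancel₀ s hβ.ne').symm
      _ ≤ β₀ / l * (l * (s / β)) := by
        rw [← mul_assoc, div_mul_cancel₀ β₀ hl.ne']; gcongr
      _ ≤ _ := by gcongr; exact le_max_left _ _
  · nlinarith [le_max_right (β₀ / l) (2 * k)]

lemma mul_le_of_div_mul_le {μ s M X φ A₀ A δ : ℝ} (hμ : 0 ≤ μ) (hM : 0 ≤ M) (hX : 0 ≤ X)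
    (hA₀ : 0 < A₀) (hs : s ≤ M * X) (hφ : X ≤ φ) (hA : A₀ ≤ A) (hδ : μ / A₀ * M ≤ δ) :
    μ * s ≤ δ * (A * φ) := by
  have hδ₀ : 0 ≤ δ := le_trans (by positivity) hδ
  calc μ * s ≤ μ * (M * X) := by gcongr
    _ = μ / A₀ * M * (A₀ * X) := by field_simp
    _ ≤ δ * (A₀ * X) := by gcongr
    _ ≤ δ * (A * φ) := by gcongr; linarith

theorem stmt15_general (n : ℕ) (hn : 0 < n) (R m l K T d δ B0 : ℝ) (hR : 0 < R) (hm : 0 < m)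
    (hl : l ∈ Set.Icc (1/3 : ℝ) 1) (hK : 0 < K) (hKb : Real.sqrt (bL l * R ^ n) ≤ K)
    (hB0le : B0 ≤ K ^ 2 / (4 * (aL l + bL l) ^ 2))
    (hB0δ : (((m * n) / (omegaN n * R ^ n)) / ((n : ℝ) * AT m (omegaN n) l R K n))
        * max (B0 / l) (2 * K * Real.sqrt B0) ≤ δ)
    (B : ℝ → ℝ)
    (hBpos : ∀ t ∈ Set.Ico (0 : ℝ) T, 0 < B t)
    (hBle : ∀ t ∈ Set.Ioo (0 : ℝ) T, B t ≤ B0) :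
    ∀ t ∈ Set.Ioo (0 : ℝ) T, ∀ s ∈ Set.Ioo (B t) (K * Real.sqrt (B t)),
      Af m (omegaN n) l R K n B t * phi l d (s / B t)
          - (((m * n) / (omegaN n * R ^ n)) / (n : ℝ)) * B t * (s / B t)
        ≥ (1 - δ) * (Af m (omegaN n) l R K n B t * phi l d (s / B t)) := by
  intro t ht s ⟨hBs, hsK⟩
  have hBt : 0 < B t := hBpos t (Ioo_subset_Ico_self ht)
  have hl₀ : 0 < l := by linarith [hl.1]
  have hω := omegaN_pos hn
  have hs₀ : 0 < s := hBt.trans hBs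
  have hBab : 2 * (aL l + bL l) * √(B t) ≤ K := two_mul_mul_sqrt_le
    (by rw [aL_add_bL hl₀.ne']; linarith) hBt.le hK.le ((hBle t ht).trans hB0le)
  have hA := AT_le_Af (div_pos hm hω).le hl hR hK (sqrt_le_iff.1 hKb).2 hBt hBab
  have hs := le_max_mul_min hl₀ hBt hs₀.le (hBle t ht)
    (hsK.le.trans (by gcongr; exact hBle t ht) : s ≤ K * √B0)
  rw [← mul_assoc] at hs
  rw [div_mul_eq_div_div] at hB0δ
  have hμs := mul_le_of_div_mul_le (by positivity) (le_max_of_le_right (by positivity))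
    (le_min (by positivity) (by norm_num)) (AT_pos (div_pos hm hω) hl₀.le hR.le) hs
    (min_mul_half_le_phi (d := d) hl ((one_lt_div hBt).2 hBs)) hA hB0δ
  rw [mul_assoc _ (B t), mul_div_cancel₀ s hBt.ne']
  linarith

/-- Intermediate region:
`A(t)φ(ξ) − (μ/n)B(t)ξ ≥ (1−δ)A(t)φ(ξ)` with `ξ = s/B(t)`. -/
theorem stmt15 (n : ℕ) (hn : 0 < n) (R m l K T d δ B0 : ℝ) (hR : 0 < R) (hm : 0 < m)
    (hl : l ∈ Set.Icc (1/3 : ℝ) 1) (hK : 0 < K) (hKb : Real.sqrt (bL l * R ^ n) ≤ K)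
    (hT : 0 < T) (hδ : δ ∈ Set.Ioo (0 : ℝ) 1)
    (hd : d ∈ Set.Ioo (1 : ℝ) 2) (hde : (2 - d) * Real.exp d - 2 = 0)
    (hB0 : B0 ∈ Set.Ioo (0 : ℝ) 1) (hB0R : K * Real.sqrt B0 < R ^ n)
    (hB0le : B0 ≤ K ^ 2 / (4 * (aL l + bL l) ^ 2))
    (hB0δ : (((m * n) / (omegaN n * R ^ n)) / ((n : ℝ) * AT m (omegaN n) l R K n))
        * max (B0 / l) (2 * K * Real.sqrt B0) ≤ δ)
    (B B' : ℝ → ℝ)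
    (hB : ∀ t ∈ Set.Ico (0 : ℝ) T, HasDerivAt B (B' t) t)
    (hB'c : ContinuousOn B' (Set.Ico 0 T))
    (hBpos : ∀ t ∈ Set.Ico (0 : ℝ) T, 0 < B t)
    (hBle : ∀ t ∈ Set.Ioo (0 : ℝ) T, B t ≤ B0) :
    ∀ t ∈ Set.Ioo (0 : ℝ) T, ∀ s ∈ Set.Ioo (B t) (K * Real.sqrt (B t)),
      Af m (omegaN n) l R K n B t * phi l d (s / B t)
          - (((m * n) / (omegaN n * R ^ n)) / (n : ℝ)) * B t * (s / B t)
        ≥ (1 - δ) * (Af m (omegaN n) l R K n B t * phi l d (s / B t)) :=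
  stmt15_general n hn R m l K T d δ B0 hR hm hl hK hKb hB0le hB0δ B hBpos hBle
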